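/- Let γ be a strictly positive (positive definite) real 2n×2n matrix with symplectic eigenvalues (d_1,…,d_n) in non-decreasing order and symplectic main diagonal elements (c_1,…,c_n) in non-decreasing order. Then for every k = 1,…,n one has Σ_{j=1}^k c_j ≥ Σ_{j=1}^k d_j. -/

import Mathlib

open Matrix Finset ComplexOrder

/-- The standard symplectic form on `2n` modes: block diagonal with
`n` blocks `[[0,1],[-1,0]]`. -/
def OmegaMat (n : ℕ) : Matrix (Fin (2*n)) (Fin (2*n)) ℝ :=
  fun i j =>
    if i.val % 2 = 0 ∧ j.val = i.val + 1 then 1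
    else if j.val % 2 = 0 ∧ i.val = j.val + 1 then -1
    else 0

/-- Membership in the real symplectic group `Sp(2n, ℝ)`. -/
def IsSymplectic {n : ℕ} (S : Matrix (Fin (2*n)) (Fin (2*n)) ℝ) : Prop :=
  S * OmegaMat n * S.transpose = OmegaMat n

/-- The Williamson diagonal matrix `diag(d₁,d₁,…,d_n,d_n)`. -/
def sympDiag {n : ℕ} (d : Fin n → ℝ) : Matrix (Fin (2*n)) (Fin (2*n)) ℝ :=
  Matrix.diagonal (fun i => d ⟨i.val / 2, by have := i.isLt; omega⟩)

/-- `γ` has symplectic eigenvalues `(d₁,…,d_n)`: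
there is `S ∈ Sp(2n,ℝ)` with `S γ Sᵀ = diag(d₁,d₁,…,d_n,d_n)`. -/
def HasSympEigenvalues {n : ℕ} (γ : Matrix (Fin (2*n)) (Fin (2*n)) ℝ)
    (d : Fin n → ℝ) : Prop :=
  ∃ S : Matrix (Fin (2*n)) (Fin (2*n)) ℝ,
    IsSymplectic S ∧ S * γ * S.transpose = sympDiag d

/-- Index `2j` in `Fin (2n)` (row/column of the first entry of mode `j`). -/
def modeIdx1 {n : ℕ} (j : Fin n) : Fin (2*n) :=
  ⟨2 * j.val, by have := j.isLt; omega⟩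

/-- Index `2j+1` in `Fin (2n)` (row/column of the second entry of mode `j`). -/
def modeIdx2 {n : ℕ} (j : Fin n) : Fin (2*n) :=
  ⟨2 * j.val + 1, by have := j.isLt; omega⟩

/-- The `j`-th symplectic main diagonal element of `γ`:
the symplectic eigenvalue of the `j`-th `2×2` main diagonal block,
`c_j = (γ_{2j-1,2j-1} γ_{2j,2j} - γ_{2j-1,2j}²)^{1/2}`. -/
noncomputable def sympMainDiag {n : ℕ} (γ : Matrix (Fin (2*n)) (Fin (2*n)) ℝ)
    (j : Fin n) : ℝ :=
  Real.sqrt (γ (modeIdx1 j) (modeIdx1 j) * γ (modeIdx2 j) (modeIdx2 j)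
    - (γ (modeIdx1 j) (modeIdx2 j))^2)

/-- `γ` is a covariance matrix of `n` modes: the complex Hermitian matrix
`γ + iσ` is positive semidefinite. -/
def IsCovarianceMatrix {n : ℕ} (γ : Matrix (Fin (2*n)) (Fin (2*n)) ℝ) : Prop :=
  (γ.map (fun x => (x : ℂ)) + Complex.I • (OmegaMat n).map (fun x => (x : ℂ))).PosSemidef

/-- `γ` is the covariance matrix of a pure Gaussian state of `n` modes:
`γ = S Sᵀ` for some `S ∈ Sp(2n,ℝ)`. -/
def IsPureCovarianceMatrix {n : ℕ} (γ : Matrix (Fin (2*n)) (Fin (2*n)) ℝ) : Prop :=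
  ∃ S : Matrix (Fin (2*n)) (Fin (2*n)) ℝ, IsSymplectic S ∧ γ = S * S.transpose


section aux
variable {n : ℕ}

lemma sum_two {M : Type*} [AddCommMonoid M] {ι : Type*} [Fintype ι] [DecidableEq ι]
    {i1 i2 : ι} (h : i1 ≠ i2) (f : ι → M) (hf : ∀ i, i ≠ i1 → i ≠ i2 → f i = 0) :
    ∑ i, f i = f i1 + f i2 := by
  classical
  rw [← Finset.sum_subset (Finset.subset_univ {i1, i2})]
  · rw [Finset.sum_pair h]
  · intro x _ hx
    simp only [Finset.mem_insert, Finset.mem_singleton, not_or] at hx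
    exact hf x hx.1 hx.2

lemma sum_fin_two_mul {M : Type*} [AddCommMonoid M] (f : Fin (2*n) → M) :
    ∑ i, f i = ∑ p : Fin n, (f (modeIdx1 p) + f (modeIdx2 p)) := by
  let e : (Fin n × Fin 2) ≃ Fin (2*n) :=
    { toFun := fun pr => ⟨2 * pr.1.val + pr.2.val, by have := pr.1.isLt; have := pr.2.isLt; omega⟩
      invFun := fun i => (⟨i.val / 2, by have := i.isLt; omega⟩, ⟨i.val % 2, by omega⟩)
      left_inv := by
        rintro ⟨p, r⟩
        have := r.isLt
        ext <;> simp <;> omega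
      right_inv := by
        intro i
        ext
        simp
        omega }
  rw [← Equiv.sum_comp e f, Fintype.sum_prod_type]
  refine Finset.sum_congr rfl fun p _ => ?_
  rw [Fin.sum_univ_two]
  congr 1 <;> exact congrArg f (by ext; simp [e, modeIdx1, modeIdx2])

lemma mode_cases (i : Fin (2*n)) : (∃ p, i = modeIdx1 p) ∨ (∃ p, i = modeIdx2 p) := by
  rcases Nat.even_or_odd i.val with h | h
  · exact Or.inl ⟨⟨i.val / 2, by have := i.isLt; omega⟩, by ext; simp [modeIdx1]; rcases h with ⟨c,hc⟩; omega⟩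
  · exact Or.inr ⟨⟨i.val / 2, by have := i.isLt; rcases h with ⟨c,hc⟩; omega⟩, by ext; simp [modeIdx2]; rcases h with ⟨c,hc⟩; omega⟩

lemma omega_11 (p q : Fin n) : OmegaMat n (modeIdx1 p) (modeIdx1 q) = 0 := by
  unfold OmegaMat
  have e1 : (modeIdx1 p).val = 2*p.val := rfl
  have e2 : (modeIdx1 q).val = 2*q.val := rfl
  split_ifs <;> norm_num <;> omega

lemma omega_22 (p q : Fin n) : OmegaMat n (modeIdx2 p) (modeIdx2 q) = 0 := by
  unfold OmegaMat
  have e1 : (modeIdx2 p).val = 2*p.val+1 := rfl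
  have e2 : (modeIdx2 q).val = 2*q.val+1 := rfl
  split_ifs <;> norm_num <;> omega

lemma omega_12 (p q : Fin n) :
    OmegaMat n (modeIdx1 p) (modeIdx2 q) = if p = q then 1 else 0 := by
  unfold OmegaMat
  have e1 : (modeIdx1 p).val = 2*p.val := rfl
  have e2 : (modeIdx2 q).val = 2*q.val+1 := rfl
  rcases eq_or_ne p q with rfl | hpq
  · split_ifs <;> norm_num <;> omega
  · have : p.val ≠ q.val := fun h => hpq (Fin.ext h)
    split_ifs <;> norm_num <;> omega

lemma omega_21 (p q : Fin n) :
    OmegaMat n (modeIdx2 p) (modeIdx1 q) = if p = q then -1 else 0 := by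
  unfold OmegaMat
  have e1 : (modeIdx2 p).val = 2*p.val+1 := rfl
  have e2 : (modeIdx1 q).val = 2*q.val := rfl
  rcases eq_or_ne p q with rfl | hpq
  · split_ifs <;> norm_num <;> omega
  · have : p.val ≠ q.val := fun h => hpq (Fin.ext h)
    split_ifs <;> norm_num <;> omega

noncomputable def sform {n : ℕ} (x y : Fin (2*n) → ℝ) : ℝ :=
  ∑ p : Fin n, (x (modeIdx1 p) * y (modeIdx2 p) - x (modeIdx2 p) * y (modeIdx1 p))

lemma mulVec_omega_1 (y : Fin (2*n) → ℝ) (p : Fin n) :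
    (OmegaMat n *ᵥ y) (modeIdx1 p) = y (modeIdx2 p) := by
  show ∑ j, OmegaMat n (modeIdx1 p) j * y j = _
  rw [sum_fin_two_mul (fun j => OmegaMat n (modeIdx1 p) j * y j)]
  have : ∀ q : Fin n, OmegaMat n (modeIdx1 p) (modeIdx1 q) * y (modeIdx1 q)
      + OmegaMat n (modeIdx1 p) (modeIdx2 q) * y (modeIdx2 q)
      = if q = p then y (modeIdx2 p) else 0 := by
    intro q
    rw [omega_11, omega_12]
    rcases eq_or_ne p q with rfl | h
    · simp
    · simp [h, Ne.symm h]
  rw [Finset.sum_congr rfl (fun q _ => this q), Finset.sum_ite_eq' Finset.univ p]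
  simp

lemma mulVec_omega_2 (y : Fin (2*n) → ℝ) (p : Fin n) :
    (OmegaMat n *ᵥ y) (modeIdx2 p) = -y (modeIdx1 p) := by
  show ∑ j, OmegaMat n (modeIdx2 p) j * y j = _
  rw [sum_fin_two_mul (fun j => OmegaMat n (modeIdx2 p) j * y j)]
  have : ∀ q : Fin n, OmegaMat n (modeIdx2 p) (modeIdx1 q) * y (modeIdx1 q)
      + OmegaMat n (modeIdx2 p) (modeIdx2 q) * y (modeIdx2 q)
      = if q = p then -y (modeIdx1 p) else 0 := by
    intro q
    rw [omega_21, omega_22]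
    rcases eq_or_ne p q with rfl | h
    · simp
    · simp [h, Ne.symm h]
  rw [Finset.sum_congr rfl (fun q _ => this q), Finset.sum_ite_eq' Finset.univ p]
  simp

lemma sform_eq (x y : Fin (2*n) → ℝ) : x ⬝ᵥ (OmegaMat n *ᵥ y) = sform x y := by
  show ∑ i, x i * (OmegaMat n *ᵥ y) i = _
  rw [sum_fin_two_mul (fun i => x i * (OmegaMat n *ᵥ y) i)]
  unfold sform
  refine Finset.sum_congr rfl fun p _ => ?_
  rw [mulVec_omega_1, mulVec_omega_2]
  ring



section all
variable {n : ℕ}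

lemma m1_ne_m2 (p q : Fin n) : modeIdx1 p ≠ modeIdx2 q := by
  intro h
  have := congrArg Fin.val h
  simp [modeIdx1, modeIdx2] at this
  omega

lemma m1_inj {p q : Fin n} (h : modeIdx1 p = modeIdx1 q) : p = q := by
  have := congrArg Fin.val h
  simp [modeIdx1] at this
  exact Fin.ext (by omega)

lemma m2_inj {p q : Fin n} (h : modeIdx2 p = modeIdx2 q) : p = q := by
  have := congrArg Fin.val h
  simp [modeIdx2] at this
  exact Fin.ext (by omega)

lemma omega_mul_row1 (p : Fin n) (j : Fin (2*n)) :
    (OmegaMat n * OmegaMat n) (modeIdx1 p) j = OmegaMat n (modeIdx2 p) j := by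
  rw [Matrix.mul_apply, sum_fin_two_mul (fun l => OmegaMat n (modeIdx1 p) l * OmegaMat n l j)]
  have : ∀ q : Fin n, OmegaMat n (modeIdx1 p) (modeIdx1 q) * OmegaMat n (modeIdx1 q) j
      + OmegaMat n (modeIdx1 p) (modeIdx2 q) * OmegaMat n (modeIdx2 q) j
      = if q = p then OmegaMat n (modeIdx2 p) j else 0 := by
    intro q
    rw [omega_11, omega_12]
    rcases eq_or_ne p q with rfl | h
    · simp
    · simp [h, Ne.symm h]
  rw [Finset.sum_congr rfl (fun q _ => this q), Finset.sum_ite_eq' Finset.univ p]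
  simp

lemma omega_mul_row2 (p : Fin n) (j : Fin (2*n)) :
    (OmegaMat n * OmegaMat n) (modeIdx2 p) j = -OmegaMat n (modeIdx1 p) j := by
  rw [Matrix.mul_apply, sum_fin_two_mul (fun l => OmegaMat n (modeIdx2 p) l * OmegaMat n l j)]
  have : ∀ q : Fin n, OmegaMat n (modeIdx2 p) (modeIdx1 q) * OmegaMat n (modeIdx1 q) j
      + OmegaMat n (modeIdx2 p) (modeIdx2 q) * OmegaMat n (modeIdx2 q) j
      = if q = p then -OmegaMat n (modeIdx1 p) j else 0 := by
    intro q
    rw [omega_21, omega_22]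
    rcases eq_or_ne p q with rfl | h
    · simp
    · simp [h, Ne.symm h]
  rw [Finset.sum_congr rfl (fun q _ => this q), Finset.sum_ite_eq' Finset.univ p]
  simp

lemma omega_mul_omega : OmegaMat n * OmegaMat n = -1 := by
  ext i j
  have hneg : (-1 : Matrix (Fin (2*n)) (Fin (2*n)) ℝ) i j = if i = j then -1 else 0 := by
    simp [Matrix.one_apply]
    split <;> simp
  rcases mode_cases i with ⟨p, rfl⟩ | ⟨p, rfl⟩
  · rw [omega_mul_row1, hneg]
    rcases mode_cases j with ⟨q, rfl⟩ | ⟨q, rfl⟩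
    · rw [omega_21]
      rcases eq_or_ne p q with rfl | h
      · simp
      · rw [if_neg h, if_neg (fun hh => h (m1_inj hh))]
    · rw [omega_22, if_neg (m1_ne_m2 p q)]
  · rw [omega_mul_row2, hneg]
    rcases mode_cases j with ⟨q, rfl⟩ | ⟨q, rfl⟩
    · rw [omega_11, if_neg (Ne.symm (m1_ne_m2 q p))]
      simp
    · rw [omega_12]
      rcases eq_or_ne p q with rfl | h
      · simp
      · rw [if_neg h, if_neg (fun hh => h (m2_inj hh))]
        simp

noncomputable instance omegaInvertible : Invertible (OmegaMat n) :=
  ⟨-OmegaMat n, by rw [Matrix.neg_mul, omega_mul_omega]; simp,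
    by rw [Matrix.mul_neg, omega_mul_omega]; simp⟩

lemma isUnit_det_of_symplectic {S : Matrix (Fin (2*n)) (Fin (2*n)) ℝ}
    (hS : IsSymplectic S) : IsUnit S.det := by
  have h := congrArg Matrix.det hS
  rw [Matrix.det_mul, Matrix.det_mul, Matrix.det_transpose] at h
  have hdetΩ : IsUnit (OmegaMat n).det := (Matrix.isUnit_iff_isUnit_det _).mp
    (isUnit_of_invertible _)
  have hne : (OmegaMat n).det ≠ 0 := hdetΩ.ne_zero
  have h3 : S.det * S.det = 1 := by
    apply mul_right_cancel₀ hne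
    rw [one_mul]
    linear_combination h
  exact IsUnit.of_mul_eq_one _ h3

lemma symplectic_inv_form {S : Matrix (Fin (2*n)) (Fin (2*n)) ℝ}
    (hS : IsSymplectic S) : S⁻¹ * OmegaMat n * (S⁻¹)ᵀ = OmegaMat n := by
  have hu := isUnit_det_of_symplectic hS
  have hts : Sᵀ * (S⁻¹)ᵀ = 1 := by
    rw [← Matrix.transpose_mul, Matrix.nonsing_inv_mul _ hu, Matrix.transpose_one]
  calc S⁻¹ * OmegaMat n * (S⁻¹)ᵀ
      = S⁻¹ * (S * OmegaMat n * Sᵀ) * (S⁻¹)ᵀ := by rw [hS]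
    _ = (S⁻¹ * S) * OmegaMat n * (Sᵀ * (S⁻¹)ᵀ) := by
        simp only [Matrix.mul_assoc]
    _ = OmegaMat n := by rw [Matrix.nonsing_inv_mul _ hu, hts, Matrix.one_mul, Matrix.mul_one]

lemma gamma_eq {S γ D : Matrix (Fin (2*n)) (Fin (2*n)) ℝ}
    (hS : IsSymplectic S) (h : S * γ * Sᵀ = D) : γ = S⁻¹ * D * (S⁻¹)ᵀ := by
  have hu := isUnit_det_of_symplectic hS
  have hts : Sᵀ * (S⁻¹)ᵀ = 1 := by
    rw [← Matrix.transpose_mul, Matrix.nonsing_inv_mul _ hu, Matrix.transpose_one]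
  rw [← h]
  calc γ = (S⁻¹ * S) * γ * (Sᵀ * (S⁻¹)ᵀ) := by
        rw [Matrix.nonsing_inv_mul _ hu, hts, Matrix.one_mul, Matrix.mul_one]
    _ = S⁻¹ * (S * γ * Sᵀ) * (S⁻¹)ᵀ := by
        simp only [Matrix.mul_assoc]

lemma congr_form (A M : Matrix (Fin (2*n)) (Fin (2*n)) ℝ) (u v : Fin (2*n) → ℝ) :
    (Aᵀ *ᵥ u) ⬝ᵥ (M *ᵥ (Aᵀ *ᵥ v)) = u ⬝ᵥ ((A * M * Aᵀ) *ᵥ v) := by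
  rw [Matrix.mulVec_mulVec, Matrix.mulVec_transpose, Matrix.dotProduct_mulVec,
    Matrix.vecMul_vecMul, Matrix.dotProduct_mulVec, Matrix.mul_assoc]



variable {γ : Matrix (Fin (2*n)) (Fin (2*n)) ℝ}

lemma dp2 (M : Matrix (Fin (2*n)) (Fin (2*n)) ℝ) (x : Fin (2*n) → ℝ) {i1 i2 : Fin (2*n)}
    (h12 : i1 ≠ i2) (hx : ∀ i, i ≠ i1 → i ≠ i2 → x i = 0) :
    x ⬝ᵥ (M *ᵥ x) = x i1 * (M i1 i1 * x i1 + M i1 i2 * x i2)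
      + x i2 * (M i2 i1 * x i1 + M i2 i2 * x i2) := by
  have hmv : ∀ i, (M *ᵥ x) i = M i i1 * x i1 + M i i2 * x i2 := by
    intro i
    show ∑ j, M i j * x j = _
    rw [sum_two h12 (fun j => M i j * x j)
      (fun i' h1 h2 => by show M i i' * x i' = 0; rw [hx i' h1 h2, mul_zero])]
  show ∑ i, x i * (M *ᵥ x) i = _
  rw [sum_two h12 (fun i => x i * (M *ᵥ x) i)
    (fun i' h1 h2 => by show x i' * (M *ᵥ x) i' = 0; rw [hx i' h1 h2, zero_mul]), hmv, hmv]

lemma posdef_apply (hγ : γ.PosDef) (x : Fin (2*n) → ℝ) (hx : x ≠ 0) :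
    0 < x ⬝ᵥ (γ *ᵥ x) := by
  have := hγ.dotProduct_mulVec_pos hx
  simpa using this

lemma entry_symm (hγ : γ.PosDef) (i j : Fin (2*n)) : γ j i = γ i j := by
  have := congrFun (congrFun hγ.1 i) j
  simpa [Matrix.conjTranspose_apply] using this

lemma diag_pos (hγ : γ.PosDef) (i : Fin (2*n)) : 0 < γ i i := by
  have hx : (fun l => if l = i then (1:ℝ) else 0) ≠ 0 := by
    intro h
    have := congrFun h i
    simp at this
  have h := posdef_apply hγ _ hx
  have hd : (fun l => if l = i then (1:ℝ) else 0) ⬝ᵥ (γ *ᵥ fun l => if l = i then (1:ℝ) else 0) = γ i i := by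
    have hmv : ∀ l, (γ *ᵥ fun l' => if l' = i then (1:ℝ) else 0) l = γ l i := by
      intro l
      show ∑ j, γ l j * (if j = i then (1:ℝ) else 0) = _
      rw [Finset.sum_eq_single i] <;> simp +contextual
    show ∑ l, (if l = i then (1:ℝ) else 0) * (γ *ᵥ _) l = _
    rw [Finset.sum_eq_single i]
    · rw [hmv]; simp
    · intro b _ hb; simp [hb]
    · simp
  rwa [hd] at h

lemma det_block_pos (hγ : γ.PosDef) (j : Fin n) :
    0 < γ (modeIdx1 j) (modeIdx1 j) * γ (modeIdx2 j) (modeIdx2 j)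
      - (γ (modeIdx1 j) (modeIdx2 j))^2 := by
  set i1 := modeIdx1 j
  set i2 := modeIdx2 j
  set A := γ i1 i1
  set B := γ i1 i2
  set E := γ i2 i2
  have hE : 0 < E := diag_pos hγ i2
  have h12 : i1 ≠ i2 := m1_ne_m2 j j
  set x : Fin (2*n) → ℝ := fun i => if i = i1 then E else if i = i2 then -B else 0 with hxdef
  have hx0 : x ≠ 0 := by
    intro h
    have := congrFun h i1
    simp [hxdef] at this
    exact absurd this (ne_of_gt hE)
  have hsupp : ∀ i, i ≠ i1 → i ≠ i2 → x i = 0 := by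
    intro i h1 h2; simp [hxdef, h1, h2]
  have h := posdef_apply hγ x hx0
  rw [dp2 γ x h12 hsupp] at h
  have hx1 : x i1 = E := by simp [hxdef]
  have hx2 : x i2 = -B := by simp [hxdef, h12.symm, if_neg (Ne.symm h12)]
  rw [hx1, hx2, entry_symm hγ i1 i2] at h
  nlinarith [hE, h]

lemma sympMainDiag_pos (hγ : γ.PosDef) (j : Fin n) : 0 < sympMainDiag γ j :=
  Real.sqrt_pos.mpr (det_block_pos hγ j)

lemma sympMainDiag_sq (hγ : γ.PosDef) (j : Fin n) :
    (sympMainDiag γ j)^2 = γ (modeIdx1 j) (modeIdx1 j) * γ (modeIdx2 j) (modeIdx2 j)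
      - (γ (modeIdx1 j) (modeIdx2 j))^2 :=
  Real.sq_sqrt (le_of_lt (det_block_pos hγ j))

noncomputable def sVal {n : ℕ} (γ : Matrix (Fin (2*n)) (Fin (2*n)) ℝ) (j : Fin n) : ℝ :=
  Real.sqrt (sympMainDiag γ j *
    (γ (modeIdx1 j) (modeIdx1 j) + γ (modeIdx2 j) (modeIdx2 j) + 2 * sympMainDiag γ j))

lemma sVal_pos (hγ : γ.PosDef) (j : Fin n) : 0 < sVal γ j := by
  apply Real.sqrt_pos.mpr
  have h1 := sympMainDiag_pos hγ j
  have h2 := diag_pos hγ (modeIdx1 j)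
  have h3 := diag_pos hγ (modeIdx2 j)
  apply mul_pos h1
  nlinarith

lemma sVal_sq (hγ : γ.PosDef) (j : Fin n) :
    (sVal γ j)^2 = sympMainDiag γ j *
      (γ (modeIdx1 j) (modeIdx1 j) + γ (modeIdx2 j) (modeIdx2 j) + 2 * sympMainDiag γ j) := by
  apply Real.sq_sqrt
  have h1 := sympMainDiag_pos hγ j
  have h2 := diag_pos hγ (modeIdx1 j)
  have h3 := diag_pos hγ (modeIdx2 j)
  nlinarith

noncomputable def Uvec {n : ℕ} (γ : Matrix (Fin (2*n)) (Fin (2*n)) ℝ) (j : Fin n) :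
    Fin (2*n) → ℝ := fun i =>
  if i = modeIdx1 j then (γ (modeIdx2 j) (modeIdx2 j) + sympMainDiag γ j) / sVal γ j
  else if i = modeIdx2 j then -(γ (modeIdx1 j) (modeIdx2 j)) / sVal γ j else 0

noncomputable def Vvec {n : ℕ} (γ : Matrix (Fin (2*n)) (Fin (2*n)) ℝ) (j : Fin n) :
    Fin (2*n) → ℝ := fun i =>
  if i = modeIdx1 j then -(γ (modeIdx1 j) (modeIdx2 j)) / sVal γ j
  else if i = modeIdx2 j then (γ (modeIdx1 j) (modeIdx1 j) + sympMainDiag γ j) / sVal γ j else 0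

lemma Uvec_supp (j : Fin n) (i : Fin (2*n)) (h1 : i ≠ modeIdx1 j) (h2 : i ≠ modeIdx2 j) :
    Uvec γ j i = 0 := by simp [Uvec, h1, h2]

lemma Vvec_supp (j : Fin n) (i : Fin (2*n)) (h1 : i ≠ modeIdx1 j) (h2 : i ≠ modeIdx2 j) :
    Vvec γ j i = 0 := by simp [Vvec, h1, h2]

lemma Uvec_supp' (j p : Fin n) (h : p ≠ j) :
    Uvec γ j (modeIdx1 p) = 0 ∧ Uvec γ j (modeIdx2 p) = 0 :=
  ⟨Uvec_supp j _ (fun hh => h (m1_inj hh)) (m1_ne_m2 p j),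
   Uvec_supp j _ (fun hh => (m1_ne_m2 j p) hh.symm) (fun hh => h (m2_inj hh))⟩

lemma Vvec_supp' (j p : Fin n) (h : p ≠ j) :
    Vvec γ j (modeIdx1 p) = 0 ∧ Vvec γ j (modeIdx2 p) = 0 :=
  ⟨Vvec_supp j _ (fun hh => h (m1_inj hh)) (m1_ne_m2 p j),
   Vvec_supp j _ (fun hh => (m1_ne_m2 j p) hh.symm) (fun hh => h (m2_inj hh))⟩

lemma Uvec_at1 (j : Fin n) : Uvec γ j (modeIdx1 j)
    = (γ (modeIdx2 j) (modeIdx2 j) + sympMainDiag γ j) / sVal γ j := by simp [Uvec]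

lemma Uvec_at2 (j : Fin n) : Uvec γ j (modeIdx2 j)
    = -(γ (modeIdx1 j) (modeIdx2 j)) / sVal γ j := by
  simp [Uvec, (m1_ne_m2 j j).symm, Ne.symm (m1_ne_m2 j j)]

lemma Vvec_at1 (j : Fin n) : Vvec γ j (modeIdx1 j)
    = -(γ (modeIdx1 j) (modeIdx2 j)) / sVal γ j := by simp [Vvec]

lemma Vvec_at2 (j : Fin n) : Vvec γ j (modeIdx2 j)
    = (γ (modeIdx1 j) (modeIdx1 j) + sympMainDiag γ j) / sVal γ j := by
  simp [Vvec, Ne.symm (m1_ne_m2 j j)]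

lemma sform_UU (i j : Fin n) : sform (Uvec γ i) (Uvec γ j) = 0 := by
  apply Finset.sum_eq_zero
  intro p _
  rcases eq_or_ne p i with rfl | hpi
  · rcases eq_or_ne p j with rfl | hpj
    · ring
    · rw [(Uvec_supp' j p (Ne.symm (Ne.symm hpj))).1, (Uvec_supp' j p hpj).2]
      ring
  · rw [(Uvec_supp' i p hpi).1, (Uvec_supp' i p hpi).2]
    ring

lemma sform_VV (i j : Fin n) : sform (Vvec γ i) (Vvec γ j) = 0 := by
  apply Finset.sum_eq_zero
  intro p _
  rcases eq_or_ne p i with rfl | hpi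
  · rcases eq_or_ne p j with rfl | hpj
    · ring
    · rw [(Vvec_supp' j p hpj).1, (Vvec_supp' j p hpj).2]
      ring
  · rw [(Vvec_supp' i p hpi).1, (Vvec_supp' i p hpi).2]
    ring

lemma sform_UV (hγ : γ.PosDef) (i j : Fin n) :
    sform (Uvec γ i) (Vvec γ j) = if i = j then 1 else 0 := by
  rcases eq_or_ne i j with rfl | hij
  · rw [if_pos rfl]
    unfold sform
    rw [Finset.sum_eq_single i]
    · rw [Uvec_at1, Uvec_at2, Vvec_at1, Vvec_at2]
      set A := γ (modeIdx1 i) (modeIdx1 i)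
      set B := γ (modeIdx1 i) (modeIdx2 i)
      set E := γ (modeIdx2 i) (modeIdx2 i)
      set C := sympMainDiag γ i with hCdef
      set s := sVal γ i with hsdef
      have hC : C^2 = A*E - B^2 := sympMainDiag_sq hγ i
      have hS : s^2 = C*(A + E + 2*C) := sVal_sq hγ i
      have hs0 : s ≠ 0 := ne_of_gt (sVal_pos hγ i)
      have hstep : (E + C)/s * ((A + C)/s) - -B/s * (-B/s)
          = ((E+C)*(A+C) - B^2)/s^2 := by ring
      rw [hstep, div_eq_one_iff_eq (pow_ne_zero 2 hs0)]
      linear_combination -hC - hS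
    · intro p _ hpi
      rw [(Uvec_supp' i p hpi).1, (Uvec_supp' i p hpi).2]
      ring
    · simp
  · rw [if_neg hij]
    apply Finset.sum_eq_zero
    intro p _
    rcases eq_or_ne p i with rfl | hpi
    · rw [(Vvec_supp' j p (fun h => hij h)).1, (Vvec_supp' j p (fun h => hij h)).2]
      ring
    · rw [(Uvec_supp' i p hpi).1, (Uvec_supp' i p hpi).2]
      ring

lemma sform_VU (hγ : γ.PosDef) (i j : Fin n) :
    sform (Vvec γ i) (Uvec γ j) = if i = j then -1 else 0 := by
  have h : sform (Vvec γ i) (Uvec γ j) = -sform (Uvec γ j) (Vvec γ i) := by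
    unfold sform
    rw [← Finset.sum_neg_distrib]
    refine Finset.sum_congr rfl fun p _ => by ring
  rw [h, sform_UV hγ]
  rcases eq_or_ne i j with rfl | hij
  · simp
  · simp [hij, Ne.symm hij]

lemma qf_UV (hγ : γ.PosDef) (j : Fin n) :
    Uvec γ j ⬝ᵥ (γ *ᵥ Uvec γ j) + Vvec γ j ⬝ᵥ (γ *ᵥ Vvec γ j) = 2 * sympMainDiag γ j := by
  have h12 : modeIdx1 j ≠ modeIdx2 j := m1_ne_m2 j j
  rw [dp2 γ _ h12 (Uvec_supp j), dp2 γ _ h12 (Vvec_supp j)]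
  rw [Uvec_at1, Uvec_at2, Vvec_at1, Vvec_at2, entry_symm hγ (modeIdx1 j) (modeIdx2 j)]
  set A := γ (modeIdx1 j) (modeIdx1 j)
  set B := γ (modeIdx1 j) (modeIdx2 j)
  set E := γ (modeIdx2 j) (modeIdx2 j)
  set C := sympMainDiag γ j with hCdef
  set s := sVal γ j with hsdef
  have hC : C^2 = A*E - B^2 := sympMainDiag_sq hγ j
  have hS : s^2 = C*(A + E + 2*C) := sVal_sq hγ j
  have hs0 : s ≠ 0 := ne_of_gt (sVal_pos hγ j)
  have hstep : (E + C)/s * (A * ((E + C)/s) + B * (-B/s))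
      + -B/s * (B * ((E + C)/s) + E * (-B/s))
      + (-B/s * (A * (-B/s) + B * ((A + C)/s))
      + (A + C)/s * (B * (-B/s) + E * ((A + C)/s)))
      = ((E+C)*(A*(E+C) - B^2) + (-B)*(B*(E+C) - E*B)
        + ((-B)*(A*(-B) + B*(A+C)) + (A+C)*(-(B^2) + E*(A+C))))/s^2 := by
    ring
  rw [hstep, div_eq_iff (pow_ne_zero 2 hs0), hS]
  linear_combination (-(A+E+4*C))*hC




end all
section core
variable {n m : ℕ}

lemma gram_vec (a b : Fin n → Fin m → ℂ)
    (hgram : ∀ i j : Fin m, ∑ p, ((starRingEnd ℂ) (a p i) * a p j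
      - (starRingEnd ℂ) (b p i) * b p j) = if i = j then 1 else 0)
    (ξ : Fin m → ℂ) :
    ∑ p, (Complex.normSq (∑ j, a p j * ξ j) - Complex.normSq (∑ j, b p j * ξ j))
      = ∑ j, Complex.normSq (ξ j) := by
  have key : ∑ p, (((starRingEnd ℂ) (∑ j, a p j * ξ j)) * (∑ j, a p j * ξ j)
      - ((starRingEnd ℂ) (∑ j, b p j * ξ j)) * (∑ j, b p j * ξ j))
      = ∑ j, ((starRingEnd ℂ) (ξ j)) * ξ j := by
    have step1 : ∀ p : Fin n, ((starRingEnd ℂ) (∑ j, a p j * ξ j)) * (∑ j, a p j * ξ j)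
        - ((starRingEnd ℂ) (∑ j, b p j * ξ j)) * (∑ j, b p j * ξ j)
        = ∑ i, ∑ j, ((starRingEnd ℂ) (ξ i) * ξ j) *
            ((starRingEnd ℂ) (a p i) * a p j - (starRingEnd ℂ) (b p i) * b p j) := by
      intro p
      rw [map_sum, map_sum, Finset.sum_mul_sum, Finset.sum_mul_sum,
        ← Finset.sum_sub_distrib]
      refine Finset.sum_congr rfl fun i _ => ?_
      rw [← Finset.sum_sub_distrib]
      refine Finset.sum_congr rfl fun j _ => ?_
      simp only [_root_.map_mul]
      ring
    rw [Finset.sum_congr rfl (fun p _ => step1 p), Finset.sum_comm]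
    have step2 : ∀ i : Fin m, ∑ p : Fin n, ∑ j,
        ((starRingEnd ℂ) (ξ i) * ξ j) *
          ((starRingEnd ℂ) (a p i) * a p j - (starRingEnd ℂ) (b p i) * b p j)
        = (starRingEnd ℂ) (ξ i) * ξ i := by
      intro i
      rw [Finset.sum_comm]
      have : ∀ j : Fin m, ∑ p : Fin n,
          ((starRingEnd ℂ) (ξ i) * ξ j) *
            ((starRingEnd ℂ) (a p i) * a p j - (starRingEnd ℂ) (b p i) * b p j)
          = ((starRingEnd ℂ) (ξ i) * ξ j) * (if i = j then 1 else 0) := by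
        intro j
        rw [← Finset.mul_sum, hgram i j]
      rw [Finset.sum_congr rfl (fun j _ => this j)]
      simp [Finset.sum_ite_eq]
    rw [Finset.sum_congr rfl (fun i _ => step2 i)]
  have recast : ∀ z : ℂ, (starRingEnd ℂ) z * z = (Complex.normSq z : ℂ) := by
    intro z
    rw [mul_comm, Complex.mul_conj]
  simp only [recast] at key
  have h2 := congrArg Complex.re key
  simpa [Complex.re_sum, Complex.sub_re, Complex.ofReal_re] using h2

noncomputable def rowMap (t : ℕ) (a : Fin n → Fin m → ℂ) :
    EuclideanSpace ℂ (Fin m) →ₗ[ℂ] ({p : Fin n // p.val < t} → ℂ) :=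
  { toFun := fun ξ => fun q => ∑ j, a q.1 j * ξ j
    map_add' := fun x y => funext fun q => by
      simp [PiLp.add_apply, mul_add, Finset.sum_add_distrib]
    map_smul' := fun c x => funext fun q => by
      simp only [PiLp.smul_apply, smul_eq_mul, RingHom.id_apply, Pi.smul_apply,
        Finset.mul_sum]
      exact Finset.sum_congr rfl fun j _ => by ring }

lemma rowMap_apply (t : ℕ) (a : Fin n → Fin m → ℂ) (ξ : EuclideanSpace ℂ (Fin m))
    (q : {p : Fin n // p.val < t}) : rowMap t a ξ q = ∑ j, a q.1 j * ξ j := rfl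

attribute [irreducible] rowMap

set_option maxHeartbeats 1000000 in
set_option synthInstance.maxHeartbeats 1000000 in
lemma tail_bound (t : ℕ) (a b : Fin n → Fin m → ℂ)
    (hgram : ∀ i j : Fin m, ∑ p, ((starRingEnd ℂ) (a p i) * a p j
      - (starRingEnd ℂ) (b p i) * b p j) = if i = j then 1 else 0) :
    (m : ℝ) - t ≤ ∑ p ∈ univ.filter (fun p : Fin n => t ≤ p.val),
      (∑ j, (Complex.normSq (a p j) + Complex.normSq (b p j))) := by
  have hRnonneg : 0 ≤ ∑ p ∈ univ.filter (fun p : Fin n => t ≤ p.val),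
      (∑ j, (Complex.normSq (a p j) + Complex.normSq (b p j))) :=
    Finset.sum_nonneg (fun p _ => Finset.sum_nonneg (fun j _ =>
      add_nonneg (Complex.normSq_nonneg _) (Complex.normSq_nonneg _)))
  rcases le_or_gt m t with hmt | htm
  · have hmt' : (m : ℝ) ≤ t := by exact_mod_cast hmt
    linarith
  set L := rowMap t a with hL
  have hdimK : m - t ≤ Module.finrank ℂ (LinearMap.ker L) := by
    have hrn := LinearMap.finrank_range_add_finrank_ker L
    have hrange : Module.finrank ℂ (LinearMap.range L) ≤ t := by
      have h1 : Module.finrank ℂ (LinearMap.range L)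
          ≤ Module.finrank ℂ ({p : Fin n // p.val < t} → ℂ) := Submodule.finrank_le _
      have h2 : Module.finrank ℂ ({p : Fin n // p.val < t} → ℂ)
          = Fintype.card {p : Fin n // p.val < t} := Module.finrank_pi ℂ
      have h3 : Fintype.card {p : Fin n // p.val < t} ≤ t := by
        have hinj : Function.Injective
            (fun p : {p : Fin n // p.val < t} => (⟨p.1.val, p.2⟩ : Fin t)) := by
          intro x y hxy
          have := congrArg Fin.val hxy
          simp at this
          exact Subtype.ext (Fin.ext this)
        simpa using Fintype.card_le_of_injective _ hinj
      omega
    have hE : Module.finrank ℂ (EuclideanSpace ℂ (Fin m)) = m := finrank_euclideanSpace_fin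
    rw [hE] at hrn
    omega
  let Bk := stdOrthonormalBasis ℂ (LinearMap.ker L)
  let ξ : Fin (Module.finrank ℂ (LinearMap.ker L)) → EuclideanSpace ℂ (Fin m) :=
    fun i => ((Bk i : LinearMap.ker L) : EuclideanSpace ℂ (Fin m))
  have horth : Orthonormal ℂ ξ :=
    Bk.orthonormal.comp_linearIsometry (LinearMap.ker L).subtypeₗᵢ
  have hker : ∀ i, ∀ p : Fin n, p.val < t → ∑ j, a p j * (ξ i) j = 0 := by
    intro i p hp
    have h0 : L (ξ i) = 0 := (Bk i).2
    have h1 := congrFun h0 ⟨p, hp⟩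
    rw [hL, rowMap_apply] at h1
    simpa using h1
  have hbessel : ∀ p : Fin n,
      ∑ i, Complex.normSq (∑ j, a p j * (ξ i) j) ≤ ∑ j, Complex.normSq (a p j) := by
    intro p
    set xp : EuclideanSpace ℂ (Fin m) :=
      (WithLp.equiv 2 (Fin m → ℂ)).symm (fun j => (starRingEnd ℂ) (a p j)) with hxp
    have hb := horth.sum_inner_products_le (s := Finset.univ) xp
    rw [EuclideanSpace.norm_eq] at hb
    rw [Real.sq_sqrt (Finset.sum_nonneg fun j _ => sq_nonneg _)] at hb
    have hinner : ∀ i, (inner ℂ (ξ i) xp : ℂ)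
        = (starRingEnd ℂ) (∑ j, a p j * (ξ i) j) := by
      intro i
      rw [PiLp.inner_apply, map_sum]
      refine Finset.sum_congr rfl fun j _ => ?_
      simp only [hxp, WithLp.equiv_symm_apply, WithLp.ofLp_toLp, RCLike.inner_apply, _root_.map_mul]
    calc ∑ i, Complex.normSq (∑ j, a p j * (ξ i) j)
        = ∑ i, ‖(inner ℂ (ξ i) xp : ℂ)‖^2 := by
          refine Finset.sum_congr rfl fun i _ => ?_
          rw [hinner i, RCLike.norm_conj, Complex.sq_norm]
      _ ≤ ∑ j, ‖xp j‖^2 := hb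
      _ = ∑ j, Complex.normSq (a p j) := by
          refine Finset.sum_congr rfl fun j _ => ?_
          simp only [hxp, WithLp.equiv_symm_apply, WithLp.ofLp_toLp]
          rw [RCLike.norm_conj, Complex.sq_norm]
  have hnorm1 : ∀ i, ∑ j, Complex.normSq ((ξ i) j) = 1 := by
    intro i
    have h1 : ‖ξ i‖ = 1 := horth.1 i
    have h2 : ‖ξ i‖^2 = ∑ j, ‖(ξ i) j‖^2 := by
      rw [EuclideanSpace.norm_eq, Real.sq_sqrt (Finset.sum_nonneg fun j _ => sq_nonneg _)]
    rw [h1] at h2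
    have h3 : ∑ j, ‖(ξ i) j‖^2 = ∑ j, Complex.normSq ((ξ i) j) :=
      Finset.sum_congr rfl fun j _ => by rw [Complex.sq_norm]
    rw [← h3, ← h2]
    norm_num
  have hchain : (Module.finrank ℂ (LinearMap.ker L) : ℝ)
      ≤ ∑ p ∈ univ.filter (fun p : Fin n => t ≤ p.val), (∑ j, Complex.normSq (a p j)) := by
    have step1 : ∀ i, (1:ℝ) ≤ ∑ p ∈ univ.filter (fun p : Fin n => t ≤ p.val),
        Complex.normSq (∑ j, a p j * (ξ i) j) := by
      intro i
      have hsplit := Finset.sum_filter_add_sum_filter_not Finset.univ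
        (fun p : Fin n => t ≤ p.val) (fun p => Complex.normSq (∑ j, a p j * (ξ i) j))
      have hzero : ∑ p ∈ univ.filter (fun p : Fin n => ¬ t ≤ p.val),
          Complex.normSq (∑ j, a p j * (ξ i) j) = 0 := by
        apply Finset.sum_eq_zero
        intro p hp
        simp only [Finset.mem_filter] at hp
        rw [hker i p (by omega)]
        simp
      have hgv := gram_vec a b hgram (fun j => (ξ i) j)
      have hbnn : 0 ≤ ∑ p : Fin n, Complex.normSq (∑ j, b p j * (ξ i) j) :=
        Finset.sum_nonneg fun p _ => Complex.normSq_nonneg _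
      have htot : (1:ℝ) ≤ ∑ p : Fin n, Complex.normSq (∑ j, a p j * (ξ i) j) := by
        rw [Finset.sum_sub_distrib] at hgv
        have := hnorm1 i
        nlinarith [hgv, hbnn]
      calc (1:ℝ) ≤ ∑ p : Fin n, Complex.normSq (∑ j, a p j * (ξ i) j) := htot
        _ = ∑ p ∈ univ.filter (fun p : Fin n => t ≤ p.val),
              Complex.normSq (∑ j, a p j * (ξ i) j) := by rw [← hsplit, hzero, add_zero]
    calc (Module.finrank ℂ (LinearMap.ker L) : ℝ)
        = ∑ _i : Fin (Module.finrank ℂ (LinearMap.ker L)), (1:ℝ) := by simp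
      _ ≤ ∑ i, ∑ p ∈ univ.filter (fun p : Fin n => t ≤ p.val),
            Complex.normSq (∑ j, a p j * (ξ i) j) :=
          Finset.sum_le_sum (fun i _ => step1 i)
      _ = ∑ p ∈ univ.filter (fun p : Fin n => t ≤ p.val),
            ∑ i, Complex.normSq (∑ j, a p j * (ξ i) j) := Finset.sum_comm
      _ ≤ ∑ p ∈ univ.filter (fun p : Fin n => t ≤ p.val),
            (∑ j, Complex.normSq (a p j)) := Finset.sum_le_sum (fun p _ => hbessel p)
  have hfinal : (m : ℝ) - t ≤ (Module.finrank ℂ (LinearMap.ker L) : ℝ) := by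
    have h1 : ((m - t : ℕ) : ℝ) ≤ (Module.finrank ℂ (LinearMap.ker L) : ℝ) := by
      exact_mod_cast hdimK
    have hcast : ((m - t : ℕ) : ℝ) = (m : ℝ) - t := by
      have htm' : t ≤ m := le_of_lt htm
      push_cast [htm']
      ring
    linarith
  calc (m:ℝ) - t ≤ (Module.finrank ℂ (LinearMap.ker L) : ℝ) := hfinal
    _ ≤ ∑ p ∈ univ.filter (fun p : Fin n => t ≤ p.val), (∑ j, Complex.normSq (a p j)) := hchain
    _ ≤ ∑ p ∈ univ.filter (fun p : Fin n => t ≤ p.val),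
          (∑ j, (Complex.normSq (a p j) + Complex.normSq (b p j))) :=
        Finset.sum_le_sum fun p _ => Finset.sum_le_sum fun j _ =>
          le_add_of_nonneg_right (Complex.normSq_nonneg _)



section all2
variable {n m : ℕ}
lemma card_filter_le (t : ℕ) (htm : t < m) :
    ((univ.filter (fun j : Fin m => t ≤ j.val)).card) = m - t := by
  have himg : (univ.filter (fun j : Fin m => t ≤ j.val))
      = Finset.image (fun x : Fin (m - t) => (⟨x.val + t, by omega⟩ : Fin m)) univ := by
    ext j
    simp only [Finset.mem_filter, Finset.mem_univ, true_and, Finset.mem_image]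
    constructor
    · intro h
      exact ⟨⟨j.val - t, by omega⟩, Fin.ext (by simp; omega)⟩
    · rintro ⟨x, -, rfl⟩
      simp
  rw [himg, Finset.card_image_of_injective _ (fun x y hxy => by
    have := congrArg Fin.val hxy
    simp at this
    exact Fin.ext this)]
  simp

lemma core_ineq (hm : m ≤ n) (d : Fin n → ℝ) (hd0 : ∀ p, 0 ≤ d p) (hmono : Monotone d)
    (a b : Fin n → Fin m → ℂ)
    (hgram : ∀ i j : Fin m, ∑ p, ((starRingEnd ℂ) (a p i) * a p j
      - (starRingEnd ℂ) (b p i) * b p j) = if i = j then 1 else 0) :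
    ∑ j : Fin m, d ⟨j.val, lt_of_lt_of_le j.isLt hm⟩
      ≤ ∑ p, d p * (∑ j, (Complex.normSq (a p j) + Complex.normSq (b p j))) := by
  set r : Fin n → ℝ := fun p => ∑ j, (Complex.normSq (a p j) + Complex.normSq (b p j)) with hr
  have hr0 : ∀ p, 0 ≤ r p := fun p => Finset.sum_nonneg (fun j _ =>
    add_nonneg (Complex.normSq_nonneg _) (Complex.normSq_nonneg _))
  classical
  set δ : ℕ → ℝ := fun t =>
    if h : t < n then (d ⟨t, h⟩ - if t = 0 then 0 else d ⟨t-1, by omega⟩) else 0 with hδ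
  have hδ0 : ∀ t, 0 ≤ δ t := by
    intro t
    by_cases h : t < n
    · by_cases h0 : t = 0
      · simp only [hδ, dif_pos h, if_pos h0]
        simpa using hd0 ⟨t, h⟩
      · simp only [hδ, dif_pos h, if_neg h0]
        have hle : (⟨t-1, by omega⟩ : Fin n) ≤ ⟨t, h⟩ := by
          simp [Fin.le_def]
        have := hmono hle
        linarith
    · simp [hδ, h]
  have htel : ∀ (v : ℕ) (h : v < n), ∑ t ∈ Finset.range (v+1), δ t = d ⟨v, h⟩ := by
    intro v
    induction v with
    | zero =>
      intro h
      simp [hδ, h]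
    | succ w ih =>
      intro h
      rw [Finset.sum_range_succ, ih (by omega)]
      have hstep : δ (w+1) = d ⟨w+1, h⟩ - d ⟨w, by omega⟩ := by
        simp only [hδ, dif_pos h]
        norm_num
      rw [hstep]
      ring_nf
  have hrange : ∀ v : ℕ, v < n → Finset.range (v+1) = (Finset.range n).filter (· ≤ v) := by
    intro v hv
    ext x
    simp only [Finset.mem_range, Finset.mem_filter]
    omega
  -- RHS rewrite
  have hRHS : ∑ p : Fin n, d p * r p
      = ∑ t ∈ Finset.range n, δ t * (∑ p ∈ univ.filter (fun p : Fin n => t ≤ p.val), r p) := by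
    have h1 : ∀ p : Fin n, d p * r p
        = ∑ t ∈ Finset.range n, (if t ≤ p.val then δ t * r p else 0) := by
      intro p
      rw [← htel p.val p.isLt, hrange p.val p.isLt, Finset.sum_filter, Finset.sum_mul]
      exact Finset.sum_congr rfl fun t _ => by split <;> simp
    rw [Finset.sum_congr rfl (fun p _ => h1 p), Finset.sum_comm]
    refine Finset.sum_congr rfl fun t _ => ?_
    rw [← Finset.sum_filter, Finset.mul_sum]
  -- LHS rewrite
  have hLHS : ∑ j : Fin m, d ⟨j.val, lt_of_lt_of_le j.isLt hm⟩
      = ∑ t ∈ Finset.range n, δ t * ((univ.filter (fun j : Fin m => t ≤ j.val)).card : ℝ) := by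
    have h1 : ∀ j : Fin m, d ⟨j.val, lt_of_lt_of_le j.isLt hm⟩
        = ∑ t ∈ Finset.range n, (if t ≤ j.val then δ t else 0) := by
      intro j
      rw [← htel j.val (lt_of_lt_of_le j.isLt hm), hrange j.val (lt_of_lt_of_le j.isLt hm),
        Finset.sum_filter]
    rw [Finset.sum_congr rfl (fun j _ => h1 j), Finset.sum_comm]
    refine Finset.sum_congr rfl fun t _ => ?_
    rw [← Finset.sum_filter, Finset.sum_const, nsmul_eq_mul, mul_comm]
  rw [hRHS, hLHS]
  apply Finset.sum_le_sum
  intro t _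
  apply mul_le_mul_of_nonneg_left _ (hδ0 t)
  -- card ≤ tail sum
  rcases le_or_gt m t with hmt | htm
  · have hempty : (univ.filter (fun j : Fin m => t ≤ j.val)) = ∅ := by
      apply Finset.filter_eq_empty_iff.mpr
      intro j _
      have := j.isLt
      omega
    rw [hempty]
    simpa using Finset.sum_nonneg (fun p (_ : p ∈ univ.filter (fun p : Fin n => t ≤ p.val)) => hr0 p)
  · rw [card_filter_le t htm]
    have hc : ((m - t : ℕ) : ℝ) = (m : ℝ) - t := by
      have : t ≤ m := le_of_lt htm
      push_cast [this]
      ring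
    rw [hc]
    exact tail_bound t a b hgram



end all2


section assemble
variable {n : ℕ}

lemma diag_entry_eq (d : Fin n → ℝ) (p : Fin n) :
    sympDiag d (modeIdx1 p) (modeIdx1 p) = d p := by
  rw [sympDiag, Matrix.diagonal_apply_eq]
  congr 1
  ext
  simp [modeIdx1]

lemma sympDiag_quad (d : Fin n → ℝ) (w : Fin (2*n) → ℝ) :
    w ⬝ᵥ (sympDiag d *ᵥ w) = ∑ p, d p * (w (modeIdx1 p)^2 + w (modeIdx2 p)^2) := by
  have hval : ∀ i : Fin (2*n), (sympDiag d *ᵥ w) i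
      = d ⟨i.val / 2, by have := i.isLt; omega⟩ * w i := by
    intro i
    rw [sympDiag, Matrix.mulVec_diagonal]
  show ∑ i, w i * (sympDiag d *ᵥ w) i = _
  rw [sum_fin_two_mul (fun i => w i * (sympDiag d *ᵥ w) i)]
  refine Finset.sum_congr rfl fun p _ => ?_
  rw [hval, hval]
  have h1 : (⟨(modeIdx1 p).val / 2, by have := (modeIdx1 p).isLt; omega⟩ : Fin n) = p := by
    ext; simp [modeIdx1]
  have h2 : (⟨(modeIdx2 p).val / 2, by have := (modeIdx2 p).isLt; omega⟩ : Fin n) = p := by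
    ext; simp [modeIdx2]
    omega
  rw [h1, h2]
  ring

lemma row_quad (S M : Matrix (Fin (2*n)) (Fin (2*n)) ℝ) (i : Fin (2*n)) :
    (S * M * Sᵀ) i i = (fun l => S i l) ⬝ᵥ (M *ᵥ (fun l => S i l)) := by
  calc (S * M * Sᵀ) i i = ∑ l, (∑ t, S i t * M t l) * S i l := by
        rw [Matrix.mul_apply]
        exact Finset.sum_congr rfl fun l _ => by
          rw [Matrix.mul_apply, Matrix.transpose_apply]
    _ = ∑ t, S i t * ∑ l, M t l * S i l := by
        simp_rw [Finset.sum_mul]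
        rw [Finset.sum_comm]
        exact Finset.sum_congr rfl fun t _ => by
          rw [Finset.mul_sum]
          exact Finset.sum_congr rfl fun l _ => by ring
    _ = _ := rfl

lemma row_ne_zero {S : Matrix (Fin (2*n)) (Fin (2*n)) ℝ} (hu : IsUnit S.det)
    (i : Fin (2*n)) : (fun l => S i l) ≠ 0 := by
  intro h
  have h1 : (S * S⁻¹) i i = 1 := by
    rw [Matrix.mul_nonsing_inv _ hu, Matrix.one_apply_eq]
  rw [Matrix.mul_apply] at h1
  have h2 : ∀ l, S i l * S⁻¹ l i = 0 := by
    intro l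
    have : S i l = 0 := congrFun h l
    rw [this, zero_mul]
  rw [Finset.sum_congr rfl (fun l _ => h2 l)] at h1
  simp at h1

lemma sum_filter_le_eq (k : Fin n) (f : Fin n → ℝ) :
    ∑ j ∈ univ.filter (· ≤ k), f j
      = ∑ j : Fin (k.val+1), f ⟨j.val, lt_of_le_of_lt (Nat.lt_succ_iff.mp j.isLt) k.isLt⟩ := by
  refine Finset.sum_nbij' (fun (a : Fin n) => (⟨min a.val k.val, by omega⟩ : Fin (k.val+1)))
    (fun (b : Fin (k.val+1)) => (⟨b.val, lt_of_le_of_lt (Nat.lt_succ_iff.mp b.isLt) k.isLt⟩ : Fin n))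
    ?_ ?_ ?_ ?_ ?_
  · intro a _; exact Finset.mem_univ _
  · intro b _
    simp only [Finset.mem_filter, Finset.mem_univ, true_and, Fin.le_def]
    have := b.isLt
    omega
  · intro a ha
    simp only [Finset.mem_filter, Finset.mem_univ, true_and, Fin.le_def] at ha
    exact Fin.ext (by simpa using Nat.min_eq_left ha)
  · intro b _
    have hb : b.val ≤ k.val := Nat.lt_succ_iff.mp b.isLt
    exact Fin.ext (by simpa using Nat.min_eq_left hb)
  · intro a ha
    simp only [Finset.mem_filter, Finset.mem_univ, true_and, Fin.le_def] at ha
    exact congrArg f (Fin.ext (by simpa using (Nat.min_eq_left ha).symm))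

end assemble

/-- **Lemma 2 (Necessity of the first `n` conditions).** If `γ` is positive
definite with symplectic eigenvalues `(d₁,…,d_n)` in non-decreasing order and
symplectic main diagonal elements `(c₁,…,c_n)` in non-decreasing order, then
`∑_{j≤k} c_j ≥ ∑_{j≤k} d_j` for every `k`. -/
theorem partial_sums_majorization (n : ℕ)
    (γ : Matrix (Fin (2*n)) (Fin (2*n)) ℝ) (hγ : γ.PosDef)
    (d c : Fin n → ℝ) (hd : HasSympEigenvalues γ d)
    (hc : ∀ j, sympMainDiag γ j = c j)
    (hd_mono : Monotone d) (hc_mono : Monotone c) :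
    ∀ k : Fin n,
      ∑ j ∈ univ.filter (· ≤ k), d j ≤ ∑ j ∈ univ.filter (· ≤ k), c j := by
  obtain ⟨S, hSp, hSD⟩ := hd
  have hu := isUnit_det_of_symplectic hSp
  intro k
  have hm : k.val + 1 ≤ n := k.isLt
  -- positivity of d
  have hd_pos : ∀ p, 0 < d p := by
    intro p
    have h1 : (S * γ * Sᵀ) (modeIdx1 p) (modeIdx1 p) = d p := by
      rw [hSD, diag_entry_eq]
    rw [row_quad] at h1
    rw [← h1]
    exact posdef_apply hγ _ (row_ne_zero hu (modeIdx1 p))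
  -- transformed vectors
  set u : Fin (k.val+1) → Fin (2*n) → ℝ :=
    fun j => Uvec γ ⟨j.val, lt_of_le_of_lt (Nat.lt_succ_iff.mp j.isLt) k.isLt⟩ with hu_def
  set v : Fin (k.val+1) → Fin (2*n) → ℝ :=
    fun j => Vvec γ ⟨j.val, lt_of_le_of_lt (Nat.lt_succ_iff.mp j.isLt) k.isLt⟩ with hv_def
  set w : Fin (k.val+1) → Fin (2*n) → ℝ := fun j => (S⁻¹)ᵀ *ᵥ u j with hw_def
  set z : Fin (k.val+1) → Fin (2*n) → ℝ := fun j => (S⁻¹)ᵀ *ᵥ v j with hz_def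
  have hWform : ∀ (x y : Fin (2*n) → ℝ),
      sform ((S⁻¹)ᵀ *ᵥ x) ((S⁻¹)ᵀ *ᵥ y) = sform x y := by
    intro x y
    rw [← sform_eq, congr_form, symplectic_inv_form hSp, sform_eq]
  have hQform : ∀ (x : Fin (2*n) → ℝ),
      ((S⁻¹)ᵀ *ᵥ x) ⬝ᵥ (sympDiag d *ᵥ ((S⁻¹)ᵀ *ᵥ x)) = x ⬝ᵥ (γ *ᵥ x) := by
    intro x
    rw [congr_form, ← gamma_eq hSp hSD]
  -- sform values for w, z
  have hJ : ∀ i j : Fin (k.val+1),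
      ((⟨i.val, lt_of_le_of_lt (Nat.lt_succ_iff.mp i.isLt) k.isLt⟩ : Fin n)
        = ⟨j.val, lt_of_le_of_lt (Nat.lt_succ_iff.mp j.isLt) k.isLt⟩) ↔ i = j := by
    intro i j
    constructor
    · intro h
      have := congrArg Fin.val h
      exact Fin.ext this
    · intro h; subst h; rfl
  have hsWW : ∀ i j, sform (w i) (w j) = 0 := by
    intro i j
    rw [hw_def]
    simp only
    rw [hWform, hu_def]
    exact sform_UU _ _
  have hsZZ : ∀ i j, sform (z i) (z j) = 0 := by
    intro i j
    rw [hz_def]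
    simp only
    rw [hWform, hv_def]
    exact sform_VV _ _
  have hsWZ : ∀ i j, sform (w i) (z j) = if i = j then 1 else 0 := by
    intro i j
    rw [hw_def, hz_def]
    simp only
    rw [hWform, hu_def, hv_def]
    simp only
    rw [sform_UV hγ]
    by_cases h : i = j
    · subst h; simp
    · rw [if_neg h, if_neg (fun hh => h ((hJ i j).mp hh))]
  -- complexification
  set a : Fin n → Fin (k.val+1) → ℂ := fun p j =>
    (⟨(w j (modeIdx1 p) + z j (modeIdx2 p))/2, (z j (modeIdx1 p) - w j (modeIdx2 p))/2⟩ : ℂ)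
      with ha_def
  set b : Fin n → Fin (k.val+1) → ℂ := fun p j =>
    (⟨(w j (modeIdx1 p) - z j (modeIdx2 p))/2, (z j (modeIdx1 p) + w j (modeIdx2 p))/2⟩ : ℂ)
      with hb_def
  have hgram : ∀ i j : Fin (k.val+1), ∑ p, ((starRingEnd ℂ) (a p i) * a p j
      - (starRingEnd ℂ) (b p i) * b p j) = if i = j then 1 else 0 := by
    intro i j
    have hterm : ∀ p : Fin n, (starRingEnd ℂ) (a p i) * a p j - (starRingEnd ℂ) (b p i) * b p j
        = (⟨((w i (modeIdx1 p) * z j (modeIdx2 p) - w i (modeIdx2 p) * z j (modeIdx1 p))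
            + (w j (modeIdx1 p) * z i (modeIdx2 p) - w j (modeIdx2 p) * z i (modeIdx1 p)))/2,
           ((-(w i (modeIdx1 p) * w j (modeIdx2 p) - w i (modeIdx2 p) * w j (modeIdx1 p)))
            + (-(z i (modeIdx1 p) * z j (modeIdx2 p) - z i (modeIdx2 p) * z j (modeIdx1 p))))/2⟩ : ℂ) := by
      intro p
      rw [ha_def, hb_def]
      apply Complex.ext <;>
        simp only [Complex.sub_re, Complex.sub_im, Complex.mul_re, Complex.mul_im,
          Complex.conj_re, Complex.conj_im] <;>
        ring
    rw [Finset.sum_congr rfl (fun p _ => hterm p)]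
    have hre : (∑ p : Fin n, (⟨((w i (modeIdx1 p) * z j (modeIdx2 p) - w i (modeIdx2 p) * z j (modeIdx1 p))
            + (w j (modeIdx1 p) * z i (modeIdx2 p) - w j (modeIdx2 p) * z i (modeIdx1 p)))/2,
           ((-(w i (modeIdx1 p) * w j (modeIdx2 p) - w i (modeIdx2 p) * w j (modeIdx1 p)))
            + (-(z i (modeIdx1 p) * z j (modeIdx2 p) - z i (modeIdx2 p) * z j (modeIdx1 p))))/2⟩ : ℂ))
        = (⟨(sform (w i) (z j) + sform (w j) (z i))/2,
            (-(sform (w i) (w j)) + -(sform (z i) (z j)))/2⟩ : ℂ) := by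
      apply Complex.ext
      · rw [Complex.re_sum]
        simp only
        rw [← Finset.sum_div, Finset.sum_add_distrib]
        rfl
      · rw [Complex.im_sum]
        simp only
        rw [← Finset.sum_div]
        congr 1
        rw [Finset.sum_add_distrib, Finset.sum_neg_distrib, Finset.sum_neg_distrib]
        rfl
    rw [hre, hsWW, hsZZ, hsWZ]
    have hji : sform (w j) (z i) = if i = j then 1 else 0 := by
      rw [hsWZ j i]
      by_cases h : i = j
      · subst h; simp
      · rw [if_neg h, if_neg (Ne.symm h)]
    rw [hji]
    by_cases h : i = j
    · subst h
      simp only [if_pos rfl]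
      apply Complex.ext <;> simp
    · rw [if_neg h, if_neg h]
      apply Complex.ext <;> simp
  -- norm-square identity
  have hnsq : ∀ (p : Fin n) (j : Fin (k.val+1)),
      Complex.normSq (a p j) + Complex.normSq (b p j)
        = (w j (modeIdx1 p)^2 + w j (modeIdx2 p)^2
          + z j (modeIdx1 p)^2 + z j (modeIdx2 p)^2)/2 := by
    intro p j
    rw [ha_def, hb_def]
    simp only [Complex.normSq_mk]
    ring
  -- apply the core inequality
  have hcore := core_ineq hm d (fun p => le_of_lt (hd_pos p)) hd_mono a b hgram
  -- rewrite RHS of core as sum of c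
  have hRHS : ∑ p, d p * (∑ j, (Complex.normSq (a p j) + Complex.normSq (b p j)))
      = ∑ j ∈ univ.filter (· ≤ k), c j := by
    have h1 : ∑ p, d p * (∑ j, (Complex.normSq (a p j) + Complex.normSq (b p j)))
        = ∑ j : Fin (k.val+1), ∑ p, d p * (Complex.normSq (a p j) + Complex.normSq (b p j)) := by
      rw [Finset.sum_comm]
      exact Finset.sum_congr rfl fun p _ => by rw [Finset.mul_sum]
    rw [h1]
    have h2 : ∀ j : Fin (k.val+1), ∑ p, d p * (Complex.normSq (a p j) + Complex.normSq (b p j))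
        = c ⟨j.val, lt_of_le_of_lt (Nat.lt_succ_iff.mp j.isLt) k.isLt⟩ := by
      intro j
      have h3 : ∑ p, d p * (Complex.normSq (a p j) + Complex.normSq (b p j))
          = (∑ p, d p * (w j (modeIdx1 p)^2 + w j (modeIdx2 p)^2)
            + ∑ p, d p * (z j (modeIdx1 p)^2 + z j (modeIdx2 p)^2))/2 := by
        rw [← Finset.sum_add_distrib, Finset.sum_div]
        refine Finset.sum_congr rfl fun p _ => ?_
        rw [hnsq p j]
        ring
      rw [h3, ← sympDiag_quad, ← sympDiag_quad]
      rw [hw_def, hz_def]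
      simp only
      rw [hQform, hQform, hu_def, hv_def]
      simp only
      rw [qf_UV hγ, hc]
      ring
    rw [Finset.sum_congr rfl (fun j _ => h2 j), sum_filter_le_eq k c]
  rw [sum_filter_le_eq k d]
  rw [← hRHS]
  exact hcore
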